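/- Let G = (X ⊔ Y, E) be a finite bipartite graph and let X = X_S ⊔ X_L, Y = Y_S ⊔ Y_L be the unique partitions satisfying: (a) there are no edges between X_S and Y_L; (b) G[X_S, Y_S] is Y-path-saturated; (c) G[X_L, Y_L] admits a matching saturating X_L. Then every maximum-cardinality matching of the subgraph G[X_L, Y_L] saturates every vertex of X_L, and is an envy-free matching in G. -/

import Mathlib

attribute [local instance] Classical.propDecidable

variable {V : Type*}

/-- `X, Y` form a bipartition of the vertex set of the simple graph `G`:
they are disjoint, cover all vertices, and every edge joins `X` to `Y`. -/
def IsBipartition [Fintype V] (G : SimpleGraph V) (X Y : Finset V) : Prop :=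
  Disjoint X Y ∧ X ∪ Y = Finset.univ ∧
    ∀ ⦃u v : V⦄, G.Adj u v → (u ∈ X ∧ v ∈ Y) ∨ (u ∈ Y ∧ v ∈ X)

/-- `M` is a matching of `G` all of whose edges go from `X'` to `Y'`
(i.e. a matching of the induced subgraph `G[X', Y']`), recorded as a set of
pairwise vertex-disjoint adjacent pairs. -/
def IsBipMatching (G : SimpleGraph V) (X' Y' : Finset V) (M : Finset (V × V)) : Prop :=
  (∀ p ∈ M, p.1 ∈ X' ∧ p.2 ∈ Y' ∧ G.Adj p.1 p.2) ∧
  ∀ p ∈ M, ∀ q ∈ M, p ≠ q → p.1 ≠ q.1 ∧ p.2 ≠ q.2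

/-- `M` is envy-free w.r.t. `X`: no unmatched vertex of `X` is adjacent to a
matched vertex on the `Y`-side of `M`. -/
def EnvyFree (G : SimpleGraph V) (X : Finset V) (M : Finset (V × V)) : Prop :=
  ∀ x ∈ X, x ∉ M.image Prod.fst → ∀ y ∈ M.image Prod.snd, ¬ G.Adj x y

/-- The (bipartite) graph `G[X ∪ Y]` is `Y`-path-saturated: for some `k ≥ 1` there are
partitions `X = X_0 ⊔ ⋯ ⊔ X_k` and `Y = Y_1 ⊔ ⋯ ⊔ Y_k` such that for `1 ≤ i ≤ k`
there is a perfect matching between `X_i` and `Y_i`, and every vertex of `Y_i` is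
adjacent to some vertex of `X_{i-1}`. -/
def YPathSaturated (G : SimpleGraph V) (X Y : Finset V) : Prop :=
  ∃ k : ℕ, 1 ≤ k ∧ ∃ A B : ℕ → Finset V,
    (∀ i ∈ Finset.range (k + 1), ∀ j ∈ Finset.range (k + 1), i ≠ j → Disjoint (A i) (A j)) ∧
    (∀ i ∈ Finset.Icc 1 k, ∀ j ∈ Finset.Icc 1 k, i ≠ j → Disjoint (B i) (B j)) ∧
    X = (Finset.range (k + 1)).biUnion A ∧
    Y = (Finset.Icc 1 k).biUnion B ∧
    (∀ i ∈ Finset.Icc 1 k, ∃ f : V → V,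
      Set.BijOn f (A i) (B i) ∧ ∀ x ∈ A i, G.Adj x (f x)) ∧
    (∀ i ∈ Finset.Icc 1 k, ∀ y ∈ B i, ∃ x ∈ A (i - 1), G.Adj x y)

/-! A matching of `G[X_L, Y_L]` saturating `X_L` has `|X_L|` edges, so every
maximum matching of `G[X_L, Y_L]` has `|X_L|` edges too and therefore saturates `X_L`.
The unmatched vertices of `X` then all lie in `X_S`, and by (a) they have no neighbour in
`Y_L`, which contains every matched vertex of `Y`. -/

namespace IsBipMatching

variable {G : SimpleGraph V} {X' Y' : Finset V} {M N : Finset (V × V)}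

theorem card_image_fst (hM : IsBipMatching G X' Y' M) : (M.image Prod.fst).card = M.card :=
  Finset.card_image_of_injOn fun p hp q hq hpq => by
    by_contra hne
    exact (hM.2 p hp q hq hne).1 hpq

theorem image_fst_subset (hM : IsBipMatching G X' Y' M) : M.image Prod.fst ⊆ X' := by
  intro x hx
  obtain ⟨p, hp, rfl⟩ := Finset.mem_image.mp hx
  exact (hM.1 p hp).1

theorem image_snd_subset (hM : IsBipMatching G X' Y' M) : M.image Prod.snd ⊆ Y' := by
  intro y hy
  obtain ⟨p, hp, rfl⟩ := Finset.mem_image.mp hy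
  exact (hM.1 p hp).2.1

theorem image_fst_eq_of_saturating_of_card_le (hM : IsBipMatching G X' Y' M)
    (hN : IsBipMatching G X' Y' N) (hsat : X' ⊆ N.image Prod.fst) (hle : N.card ≤ M.card) :
    M.image Prod.fst = X' := by
  refine Finset.eq_of_subset_of_card_le hM.image_fst_subset ?_
  calc X'.card ≤ (N.image Prod.fst).card := Finset.card_le_card hsat
    _ = N.card := hN.card_image_fst
    _ ≤ M.card := hle
    _ = (M.image Prod.fst).card := hM.card_image_fst.symm

theorem envyFree_of_subset_image_fst {X XS : Finset V} (hM : IsBipMatching G X' Y' M)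
    (hsat : X' ⊆ M.image Prod.fst) (hX : X ⊆ XS ∪ X')
    (hXS : ∀ x ∈ XS, ∀ y ∈ Y', ¬ G.Adj x y) : EnvyFree G X M := by
  intro x hx hxM y hy
  have hxS : x ∈ XS := by
    rcases Finset.mem_union.mp (hX hx) with h | h
    · exact h
    · exact absurd (hsat h) hxM
  exact hXS x hxS y (hM.image_snd_subset hy)

end IsBipMatching

theorem max_matching_of_XL_envy_free_general (G : SimpleGraph V) (X : Finset V)
    (XS XL YL : Finset V)
    (hXunion : XS ∪ XL = X)
    (ha : ∀ x ∈ XS, ∀ y ∈ YL, ¬ G.Adj x y)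
    (hc : ∃ M : Finset (V × V), IsBipMatching G XL YL M ∧ XL ⊆ M.image Prod.fst) :
    ∀ M : Finset (V × V), IsBipMatching G XL YL M →
      (∀ M' : Finset (V × V), IsBipMatching G XL YL M' → M'.card ≤ M.card) →
      XL ⊆ M.image Prod.fst ∧ EnvyFree G X M := by
  intro M hM hmax
  obtain ⟨M₀, hM₀, hsat₀⟩ := hc
  have hsat : M.image Prod.fst = XL :=
    hM.image_fst_eq_of_saturating_of_card_le hM₀ hsat₀ (hmax M₀ hM₀)
  exact ⟨hsat.ge, hM.envyFree_of_subset_image_fst hsat.ge hXunion.ge ha⟩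

/-- if `X = X_S ⊔ X_L` and `Y = Y_S ⊔ Y_L` are the (unique) partitions
satisfying (a), (b), (c), then every maximum-cardinality matching of `G[X_L, Y_L]`
saturates every vertex of `X_L` and is an envy-free matching in `G`. -/
theorem max_matching_of_XL_envy_free [Fintype V] (G : SimpleGraph V) (X Y : Finset V)
    (hBip : IsBipartition G X Y)
    (XS XL YS YL : Finset V)
    (hXdisj : Disjoint XS XL) (hXunion : XS ∪ XL = X)
    (hYdisj : Disjoint YS YL) (hYunion : YS ∪ YL = Y)
    (ha : ∀ x ∈ XS, ∀ y ∈ YL, ¬ G.Adj x y)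
    (hb : YPathSaturated G XS YS)
    (hc : ∃ M : Finset (V × V), IsBipMatching G XL YL M ∧ XL ⊆ M.image Prod.fst) :
    ∀ M : Finset (V × V), IsBipMatching G XL YL M →
      (∀ M' : Finset (V × V), IsBipMatching G XL YL M' → M'.card ≤ M.card) →
      XL ⊆ M.image Prod.fst ∧ EnvyFree G X M :=
  max_matching_of_XL_envy_free_general G X XS XL YL hXunion ha hc
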